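/- arXiv:math/0606116 — 2 statements merged into one kernel-verified Lean document; each statement's English description precedes it below -/
import Mathlib

section
/- In a bi-orderable group G, if gⁿ commutes with h for some n ≥ 1, then g commutes with h. -/
def BiOrderable (G : Type*) [Group G] : Prop :=
  ∃ r : G → G → Prop, IsStrictTotalOrder G r ∧
    (∀ g h k : G, r g h → r (g * k) (h * k)) ∧
    (∀ g h k : G, r g h → r (k * g) (k * h))

theorem stmt_8 {G : Type*} [Group G] (hG : BiOrderable G)
    {g h : G} {n : ℕ} (hn : 1 ≤ n) (hc : Commute (g ^ n) h) : Commute g h := by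
  obtain ⟨r, hsto, hR, hL⟩ := hG
  have key : ∀ x y : G, r x y → ∀ m : ℕ, 1 ≤ m → r (x ^ m) (y ^ m) := by
    intro x y hxy m hm
    induction m with
    | zero => omega
    | succ k ih =>
      rcases Nat.lt_or_ge k 1 with h1 | h1
      · interval_cases k
        simpa using hxy
      · have h2 := ih h1
        have h3 : r (x * x ^ k) (x * y ^ k) := hL _ _ _ h2
        have h4 : r (x * y ^ k) (y * y ^ k) := hR _ _ _ hxy
        have h5 := hsto.trans _ _ _ h3 h4
        simpa [pow_succ'] using h5
  have hxn : (h * g * h⁻¹) ^ n = g ^ n := by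
    rw [conj_pow, ← hc.eq, mul_inv_cancel_right]
  have hx : h * g * h⁻¹ = g := by
    rcases @trichotomous _ r hsto.toTrichotomous (h * g * h⁻¹) g with ht | ht | ht
    · exact absurd hxn (fun e => hsto.irrefl _ (e ▸ key _ _ ht n hn))
    · exact ht
    · exact absurd hxn.symm (fun e => hsto.irrefl _ (e ▸ key _ _ ht n hn))
  exact (mul_inv_eq_iff_eq_mul.mp hx).symm
end

section
/- In any group, the set of relations {p_{k+1} = p_k p_{k+2} for all k ∈ ℤ, p_k q = q p_{k+1} for all k ∈ ℤ} holds if and only if the set {p_{k+1} = p_k p_{k+2} for all k ∈ ℤ, p₀q = qp₁, p₁q = qp₀⁻¹p₁} holds. -/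
theorem stmt_17 {G : Type*} [Group G] (p : ℤ → G) (q : G) :
    ((∀ k : ℤ, p (k + 1) = p k * p (k + 2)) ∧ (∀ k : ℤ, p k * q = q * p (k + 1))) ↔
    ((∀ k : ℤ, p (k + 1) = p k * p (k + 2)) ∧
      p 0 * q = q * p 1 ∧ p 1 * q = q * (p 0)⁻¹ * p 1) := by
  constructor
  · rintro ⟨hrec, hq⟩
    refine ⟨hrec, by simpa using hq 0, ?_⟩
    have h2 : p 2 = (p 0)⁻¹ * p 1 := by
      have := hrec 0; norm_num at this
      rw [this]; group
    have := hq 1; norm_num at this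
    rw [h2] at this
    rw [this]; group
  · rintro ⟨hrec, h0, h1⟩
    refine ⟨hrec, ?_⟩
    have key : ∀ k : ℤ, (p k * q = q * p (k + 1)) ∧ (p (k + 1) * q = q * p (k + 2)) := by
      intro k
      induction k using Int.induction_on with
      | zero =>
        have h2 : p 2 = (p 0)⁻¹ * p 1 := by
          have := hrec 0; norm_num at this
          rw [this]; group
        norm_num
        refine ⟨h0, ?_⟩
        rw [h2, h1]; group
      | succ n ih =>
        obtain ⟨ha, hb⟩ := ih
        constructor
        · rw [show ((n : ℤ) + 1) + 1 = n + 2 by ring]; exact hb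
        · rw [show ((n : ℤ) + 1) + 1 = n + 2 by ring,
            show ((n : ℤ) + 1) + 2 = n + 3 by ring]
          have e2 : p ((n : ℤ) + 2) = (p n)⁻¹ * p (n + 1) := by
            have := hrec n; rw [this]; group
          have e3 : p ((n : ℤ) + 3) = (p (n + 1))⁻¹ * p (n + 2) := by
            have := hrec ((n : ℤ) + 1)
            rw [show (n : ℤ) + 1 + 1 = n + 2 by ring,
              show (n : ℤ) + 1 + 2 = n + 3 by ring] at this
            rw [this]; group
          have hc : q⁻¹ * p (n : ℤ) * q = p ((n : ℤ) + 1) := by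
            rw [mul_assoc, ha]; group
          have hainv : (p (n : ℤ))⁻¹ * q = q * (p ((n : ℤ) + 1))⁻¹ := by
            rw [← hc]; group
          rw [e2, e3, mul_assoc, hb, ← mul_assoc, hainv]; group
      | pred n ih =>
        obtain ⟨ha, hb⟩ := ih
        constructor
        · rw [show -(n : ℤ) - 1 + 1 = -n by ring]
          have e : p (-(n : ℤ) - 1) = p (-n) * (p (-n + 1))⁻¹ := by
            have := hrec (-(n : ℤ) - 1)
            rw [show -(n : ℤ) - 1 + 1 = -n by ring,
              show -(n : ℤ) - 1 + 2 = -n + 1 by ring] at this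
            rw [this]; group
          have hc : q⁻¹ * p (-(n : ℤ) + 1) * q = p (-(n : ℤ) + 2) := by
            rw [mul_assoc, hb]; group
          have hbinv : (p (-(n : ℤ) + 1))⁻¹ * q = q * (p (-(n : ℤ) + 2))⁻¹ := by
            rw [← hc]; group
          rw [e, mul_assoc, hbinv, ← mul_assoc, ha]
          have := hrec (-(n : ℤ))
          rw [this]; group
        · rw [show -(n : ℤ) - 1 + 1 = -n by ring,
            show -(n : ℤ) - 1 + 2 = -n + 1 by ring]
          exact ha
    exact fun k => (key k).1
end
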